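/- If L is a strongly Z-graded ring, then any projective right L-module is projective when considered as a right L_0-module by restriction of scalars. -/

import Mathlib

/-!
Since `L_k L_{-k} = L_0 ∋ 1`, we can write `1 = ∑ xᵢ yᵢ` with `xᵢ ∈ L_k` and `yᵢ ∈ L_{-k}`; the
elements `xᵢ` and the maps `a ↦ yᵢ a : L_k → L_0` then form a finite dual basis of `L_k` as a right
`L_0`-module. Hence each `L_k`, and so `L = ⨁ₖ L_k`, is a projective right `L_0`-module.
Projectivity is transitive along `L_0 ⊆ L`: a projective `L`-module is a summand of a direct sum
of copies of `L`.
-/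

open Pointwise MulOpposite

/-- A `ℤ`-graded ring is *strongly graded* if `L_k · L_ℓ = L_{k+ℓ}` for all `k, ℓ`. -/
def IsStronglyGraded {L : Type*} [Ring L] (𝒜 : ℤ → AddSubgroup L) : Prop :=
  ∀ k l : ℤ, 𝒜 k * 𝒜 l = 𝒜 (k + l)

section
variable {L : Type*} [Ring L] (𝒜 : ℤ → AddSubgroup L) [GradedRing 𝒜]

/-- The inclusion of the degree-zero subring `L_0` into `L`, as a ring homomorphism. -/
def gradeZeroInclusion : (↥(𝒜 0)) →+* L where
  toFun x := (x : L)
  map_one' := rfl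
  map_mul' := fun _ _ => rfl
  map_zero' := rfl
  map_add' := fun _ _ => rfl

end

theorem AddSubgroup.exists_fin_sum_mul_eq_of_mem_mul {R : Type*} [NonUnitalNonAssocRing R]
    {A B : AddSubgroup R} {a : R} (ha : a ∈ A * B) :
    ∃ (n : ℕ) (x : Fin n → A) (y : Fin n → B), ∑ i, (x i : R) * y i = a := by
  refine AddSubmonoid.mul_induction_on (M := A.toAddSubmonoid) (N := B.toAddSubmonoid) ha ?_ ?_
  · exact fun x hx y hy => ⟨1, fun _ => ⟨x, hx⟩, fun _ => ⟨y, hy⟩, by simp⟩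
  · rintro _ _ ⟨n, x, y, rfl⟩ ⟨m, x', y', rfl⟩
    exact ⟨n + m, Fin.append x x', Fin.append y y', by simp [Fin.sum_univ_add]⟩

theorem Module.Projective.of_fintype_dual_basis {R P ι : Type*} [Semiring R] [AddCommMonoid P]
    [Module R P] [Fintype ι] (x : ι → P) (f : ι → P →ₗ[R] R) (h : ∀ p, ∑ i, f i p • x i = p) :
    Module.Projective R P :=
  .of_split (LinearMap.pi f) (Fintype.linearCombination R x) (LinearMap.ext h)

theorem Module.Projective.trans {R S M : Type*} [Semiring R] [Semiring S]
    [AddCommMonoid M] [Module S M] [Module R S] [Module R M]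
    [IsScalarTower R S S] [IsScalarTower R S M]
    [Module.Projective R S] [Module.Projective S M] : Module.Projective R M := by
  classical
  obtain ⟨s, hs⟩ := ‹Module.Projective S M›
  have : Module.Projective R (M →₀ S) := .of_equiv (finsuppLequivDFinsupp R).symm
  exact .of_split (s.restrictScalars R) ((Finsupp.linearCombination S id).restrictScalars R)
    (LinearMap.ext fun m => by simpa using hs m)

theorem Module.Projective.compHom {R S M : Type*} [Semiring R] [Semiring S] [AddCommMonoid M]
    [Module S M] [Module.Projective S M] (f : R →+* S)
    (hS : letI := Module.compHom S f; Module.Projective R S) :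
    letI := Module.compHom M f; Module.Projective R M := by
  let := Module.compHom S f
  let := Module.compHom M f
  have : IsScalarTower R S S := ⟨fun r s t => mul_assoc (f r) s t⟩
  have : IsScalarTower R S M := ⟨fun r s m => mul_smul (f r) s m⟩
  exact trans (S := S)

theorem IsStronglyGraded.one_mem_mul_neg {L : Type*} [Ring L] {𝒜 : ℤ → AddSubgroup L}
    [SetLike.GradedOne 𝒜] (h : IsStronglyGraded 𝒜) (k : ℤ) : (1 : L) ∈ 𝒜 k * 𝒜 (-k) := by
  rw [h, add_neg_cancel]
  exact SetLike.one_mem_graded 𝒜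

section
variable {L : Type*} [Ring L] (𝒜 : ℤ → AddSubgroup L) [GradedRing 𝒜]

instance : Module (↥(𝒜 0))ᵐᵒᵖ L := Module.compHom L (RingHom.op (gradeZeroInclusion 𝒜))

theorem gradeZero_smul_eq_mul_unop (r : (↥(𝒜 0))ᵐᵒᵖ) (a : L) :
    r • a = a * ((unop r : 𝒜 0) : L) :=
  rfl

def gradeSubmodule (k : ℤ) : Submodule (↥(𝒜 0))ᵐᵒᵖ L where
  __ := 𝒜 k
  smul_mem' r a ha := by
    simpa [gradeZero_smul_eq_mul_unop] using SetLike.mul_mem_graded ha (unop r).2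

instance : DirectSum.Decomposition (gradeSubmodule 𝒜) where
  decompose' := DirectSum.decompose 𝒜
  left_inv := (DirectSum.decompose 𝒜).symm_apply_apply
  right_inv := (DirectSum.decompose 𝒜).apply_symm_apply

theorem projective_gradeSubmodule_of_one_mem_mul {k : ℤ} (h : (1 : L) ∈ 𝒜 k * 𝒜 (-k)) :
    Module.Projective (↥(𝒜 0))ᵐᵒᵖ (gradeSubmodule 𝒜 k) := by
  obtain ⟨n, x, y, hxy⟩ := AddSubgroup.exists_fin_sum_mul_eq_of_mem_mul h
  let f (i : Fin n) : gradeSubmodule 𝒜 k →ₗ[(↥(𝒜 0))ᵐᵒᵖ] (↥(𝒜 0))ᵐᵒᵖ :=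
    { toFun a := op ⟨y i * a, by simpa using SetLike.mul_mem_graded (y i).2 a.2⟩
      map_add' a b := by apply unop_injective; ext; simp [mul_add]
      map_smul' r a := by apply unop_injective; ext; simp [gradeZero_smul_eq_mul_unop, mul_assoc] }
  refine .of_fintype_dual_basis (fun i => ⟨x i, (x i).2⟩) f fun a => ?_
  ext
  simp [f, gradeZero_smul_eq_mul_unop, ← mul_assoc, ← Finset.sum_mul, hxy]

theorem projective_mop_of_one_mem_mul (h : ∀ k, (1 : L) ∈ 𝒜 k * 𝒜 (-k)) :
    letI := Module.compHom Lᵐᵒᵖ (RingHom.op (gradeZeroInclusion 𝒜))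
    Module.Projective (↥(𝒜 0))ᵐᵒᵖ Lᵐᵒᵖ :=
  let := Module.compHom Lᵐᵒᵖ (RingHom.op (gradeZeroInclusion 𝒜))
  have (k : ℤ) := projective_gradeSubmodule_of_one_mem_mul 𝒜 (h k)
  .of_equiv ((DirectSum.decomposeLinearEquiv (gradeSubmodule 𝒜)).symm ≪≫ₗ
    ({ opAddEquiv with map_smul' _ _ := rfl } : L ≃ₗ[(↥(𝒜 0))ᵐᵒᵖ] Lᵐᵒᵖ))

/-- If `L` is a strongly `ℤ`-graded ring, then any projective right `L`-module is
projective as a right `L_0`-module via restriction of scalars along `L_0 ⊆ L`. -/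
theorem projective_restrict_gradeZero (h : IsStronglyGraded 𝒜)
    (M : Type*) [AddCommGroup M] [Module Lᵐᵒᵖ M] [Module.Projective Lᵐᵒᵖ M] :
    letI : Module (↥(𝒜 0))ᵐᵒᵖ M := Module.compHom M (RingHom.op (gradeZeroInclusion 𝒜))
    Module.Projective (↥(𝒜 0))ᵐᵒᵖ M :=
  .compHom _ (projective_mop_of_one_mem_mul 𝒜 h.one_mem_mul_neg)

end
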